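/- arXiv:2408.06510 — 3 statements merged into one kernel-verified Lean document; each statement's English description precedes it below -/
import Mathlib

section
/- Blow-ups at interior wall points for smooth first-layer norms: let N be a norm on ℝⁿ × ℝⁿ, λ > 0, and let p = (a, b, c) with N(a,b) = 1 and λ√|c| < 1. If N is Fréchet differentiable at (a,b) with derivative D, then for every q = (x,y,z) ∈ H_{2n+1}(ℝ), lim_{t→0⁺} (‖p·δ_t q‖ − 1)/t = D(x,y); in particular the blow-up function is linear in the first-layer coordinates and independent of z. -/
/-!
Along `t ↦ p·δ_t q` the first layer moves on the line `(a,b) + t(x,y)`, while the second layer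
stays continuous in `t`. Since `λ√|c| < 1 = N(a,b)`, the first layer strictly dominates the
maximum near `t = 0`, so the layered norm agrees there with `t ↦ N((a,b) + t(x,y))`, whose
derivative at `0` is `D(x,y)` by the chain rule.
-/

open Filter Metric Real

noncomputable section

/-- The higher Heisenberg group `H_{2n+1}(ℝ)` as `ℝⁿ × ℝⁿ × ℝ`. -/
abbrev Heis (n : ℕ) := (Fin n → ℝ) × (Fin n → ℝ) × ℝ

/-- Standard inner product on `ℝⁿ`. -/
def dotR {n : ℕ} (x y : Fin n → ℝ) : ℝ := ∑ i, x i * y i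

/-- Heisenberg group product. -/
def Hmul {n : ℕ} (p q : Heis n) : Heis n :=
  (p.1 + q.1, p.2.1 + q.2.1,
    p.2.2 + q.2.2 + (1 / 2) * (dotR p.1 q.2.1 - dotR q.1 p.2.1))

/-- Heisenberg dilations `δ_t(x,y,z) = (tx, ty, t²z)`. -/
def Hdil {n : ℕ} (t : ℝ) (p : Heis n) : Heis n :=
  (t • p.1, t • p.2.1, t ^ 2 * p.2.2)

/-- The layered sup quasi-norm `max(N(x,y), λ√|z|)`. -/
def layeredNorm {n : ℕ} (N : (Fin n → ℝ) × (Fin n → ℝ) → ℝ) (lam : ℝ) (p : Heis n) : ℝ :=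
  max (N (p.1, p.2.1)) (lam * Real.sqrt |p.2.2|)

theorem HasDerivAt.max_of_lt {f g : ℝ → ℝ} {f' x : ℝ} (hf : HasDerivAt f f' x)
    (hg : ContinuousAt g x) (hlt : g x < f x) :
    HasDerivAt (fun t => max (f t) (g t)) f' x := by
  refine hf.congr_of_eventuallyEq ?_
  filter_upwards [hg.eventually_lt hf.continuousAt hlt] with t ht
  exact max_eq_left ht.le

theorem dotR_smul_left {n : ℕ} (t : ℝ) (x y : Fin n → ℝ) : dotR (t • x) y = t * dotR x y :=
  smul_dotProduct t x y

theorem dotR_smul_right {n : ℕ} (t : ℝ) (x y : Fin n → ℝ) : dotR x (t • y) = t * dotR x y :=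
  dotProduct_smul t x y

theorem Hmul_Hdil {n : ℕ} (p q : Heis n) (t : ℝ) :
    Hmul p (Hdil t q) =
      (p.1 + t • q.1, p.2.1 + t • q.2.1,
        p.2.2 + t ^ 2 * q.2.2 + t * ((1 / 2) * (dotR p.1 q.2.1 - dotR q.1 p.2.1))) := by
  simp only [Hmul, Hdil, dotR_smul_left, dotR_smul_right]
  ring_nf

theorem layeredNorm_Hmul_Hdil {n : ℕ} (N : (Fin n → ℝ) × (Fin n → ℝ) → ℝ) (lam : ℝ)
    (a b x y : Fin n → ℝ) (c z t : ℝ) :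
    layeredNorm N lam (Hmul (a, b, c) (Hdil t (x, y, z))) =
      max (N ((a, b) + t • (x, y)))
        (lam * √|c + t ^ 2 * z + t * ((1 / 2) * (dotR a y - dotR x b))|) := by
  rw [layeredNorm, Hmul_Hdil]
  rfl

theorem blowup_wall_smooth_general (n : ℕ) (N : (Fin n → ℝ) × (Fin n → ℝ) → ℝ)
    (lam : ℝ)
    (a b : Fin n → ℝ) (c : ℝ) (hab : N (a, b) = 1) (hc : lam * Real.sqrt |c| < 1)
    (D : ((Fin n → ℝ) × (Fin n → ℝ)) →L[ℝ] ℝ) (hD : HasFDerivAt N D (a, b))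
    (x y : Fin n → ℝ) (z : ℝ) :
    Tendsto
      (fun t : ℝ => (layeredNorm N lam (Hmul (a, b, c) (Hdil t (x, y, z))) - 1) / t)
      (nhdsWithin 0 (Set.Ioi 0)) (nhds (D (x, y))) := by
  set F := fun t : ℝ => layeredNorm N lam (Hmul (a, b, c) (Hdil t (x, y, z)))
  have hline : HasDerivAt (fun t : ℝ => (a, b) + t • (x, y)) (x, y) 0 := by
    simpa using ((hasDerivAt_id (0 : ℝ)).smul_const (x, y)).const_add (a, b)
  have hF : HasDerivAt F (D (x, y)) 0 := by
    simp only [F, layeredNorm_Hmul_Hdil]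
    refine HasDerivAt.max_of_lt (hD.comp_hasDerivAt_of_eq 0 hline (by simp)) (by fun_prop) ?_
    simpa [hab] using hc
  have hF0 : F 0 = 1 := by
    simp [F, layeredNorm_Hmul_Hdil, hab, hc.le]
  refine ((hasDerivAt_iff_tendsto_slope_zero.mp hF).mono_left
    (nhdsWithin_mono 0 fun t ht => ne_of_gt ht)).congr fun t => ?_
  rw [zero_add, hF0, smul_eq_mul, div_eq_inv_mul]

/-- **Blow-ups at interior wall points for smooth first-layer norms.** If `N` is Fréchet
differentiable at `(a,b)` with derivative `D`, `N(a,b) = 1` and `λ√|c| < 1`, then the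
blow-up of the layered sup norm at `p = (a,b,c)` is `D(x,y)`: linear in the first-layer
coordinates and independent of `z`. -/
theorem blowup_wall_smooth (n : ℕ) (N : (Fin n → ℝ) × (Fin n → ℝ) → ℝ)
    (hN_add : ∀ u v, N (u + v) ≤ N u + N v)
    (hN_smul : ∀ (c : ℝ) u, N (c • u) = |c| * N u)
    (hN_zero : ∀ u, N u = 0 ↔ u = 0)
    (lam : ℝ) (hlam : 0 < lam)
    (a b : Fin n → ℝ) (c : ℝ) (hab : N (a, b) = 1) (hc : lam * Real.sqrt |c| < 1)
    (D : ((Fin n → ℝ) × (Fin n → ℝ)) →L[ℝ] ℝ) (hD : HasFDerivAt N D (a, b))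
    (x y : Fin n → ℝ) (z : ℝ) :
    Tendsto
      (fun t : ℝ => (layeredNorm N lam (Hmul (a, b, c) (Hdil t (x, y, z))) - 1) / t)
      (nhdsWithin 0 (Set.Ioi 0)) (nhds (D (x, y))) :=
  blowup_wall_smooth_general n N lam a b c hab hc D hD x y z
end
end

section
/- Pansu derivative of the ceiling-cone defining functions at seam points: let a, b, α, β ∈ ℝⁿ with α⋅a + β⋅b = 1, let λ > 0, set p = (a, b, 1/λ²) ∈ H_{2n+1}(ℝ), and define G(x,y,z) = (α⋅x + β⋅y)² − λ² z, so that G(p) = 0. Then for every q = (x,y,z) ∈ H_{2n+1}(ℝ), lim_{t→0⁺} G(p·δ_t q)/t = (2α + (λ²/2) b)⋅x + (2β − (λ²/2) a)⋅y, and the value of this limit at q = p⁻¹ = (−a, −b, −1/λ²) equals −2. -/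
/-!
Expanding the group law, `t ↦ G(p·δ_t q)` is the polynomial `G(p) + t·ℓ_p(q) + t²·G(q)`.
At a seam point `G(p) = 0`, so `G(p·δ_t q)/t` tends to the linear coefficient `ℓ_p(q)`, its derivative at `0`; at `q = p⁻¹` this
coefficient is `-2(α⋅a + β⋅b) = -2` because the symplectic terms `b⋅a - a⋅b` cancel.
-/

open Filter Metric Real

noncomputable section

/-- Ceiling-cone defining function `G(x,y,z) = (α⋅x + β⋅y)² − λ²z`. -/
def ceilG {n : ℕ} (α β : Fin n → ℝ) (lam : ℝ) (q : Heis n) : ℝ :=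
  (dotR α q.1 + dotR β q.2.1) ^ 2 - lam ^ 2 * q.2.2

open Topology

section

variable {n : ℕ}

theorem dotR_eq_dotProduct (x y : Fin n → ℝ) : dotR x y = x ⬝ᵥ y := rfl

theorem ceilG_Hmul_Hdil (α β : Fin n → ℝ) (lam t : ℝ) (p q : Heis n) :
    ceilG α β lam (Hmul p (Hdil t q)) =
      ceilG α β lam p
        + t * (2 * (dotR α p.1 + dotR β p.2.1) * (dotR α q.1 + dotR β q.2.1)
          + lam ^ 2 / 2 * (dotR p.2.1 q.1 - dotR p.1 q.2.1))
        + t ^ 2 * ceilG α β lam q := by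
  simp only [ceilG, Hmul, Hdil, dotR_eq_dotProduct, dotProduct_add, dotProduct_smul, smul_dotProduct,
    smul_eq_mul, dotProduct_comm q.1 p.2.1]
  ring

theorem ceilG_seam {a b α β : Fin n → ℝ} (hface : dotR α a + dotR β b = 1) {lam : ℝ}
    (hlam : lam ≠ 0) : ceilG α β lam (a, b, 1 / lam ^ 2) = 0 := by
  simp only [ceilG, hface]
  field_simp
  ring

end

theorem tendsto_div_nhdsGT_of_eq_mul_add_sq {f : ℝ → ℝ} {c d : ℝ}
    (hf : ∀ t, f t = t * c + t ^ 2 * d) : Tendsto (fun t => f t / t) (𝓝[>] 0) (𝓝 c) := by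
  have hderiv : HasDerivAt f c 0 := by
    rw [funext hf]
    simpa using (hasDerivAt_mul_const c).fun_add ((hasDerivAt_pow 2 (0 : ℝ)).mul_const d)
  convert hderiv.tendsto_slope_zero_right using 2 with t
  simp [hf, div_eq_inv_mul]

/-- **Pansu derivative of the ceiling-cone defining functions at seam points.** With
`α⋅a + β⋅b = 1` and `p = (a, b, 1/λ²)` (so `G(p) = 0`), for every `q = (x,y,z)` the limit
`lim_{t→0⁺} G(p·δ_t q)/t` equals `(2α + (λ²/2)b)⋅x + (2β − (λ²/2)a)⋅y`, and its value at
`q = p⁻¹ = (−a, −b, −1/λ²)` is `−2`. -/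
theorem pansu_ceiling_cone (n : ℕ) (a b α β : Fin n → ℝ)
    (hface : dotR α a + dotR β b = 1) (lam : ℝ) (hlam : 0 < lam) :
    (∀ x y : Fin n → ℝ, ∀ z : ℝ,
        Tendsto
          (fun t : ℝ => ceilG α β lam (Hmul (a, b, 1 / lam ^ 2) (Hdil t (x, y, z))) / t)
          (nhdsWithin 0 (Set.Ioi 0))
          (nhds (dotR ((2 : ℝ) • α + (lam ^ 2 / 2) • b) x
            + dotR ((2 : ℝ) • β - (lam ^ 2 / 2) • a) y))) ∧
      dotR ((2 : ℝ) • α + (lam ^ 2 / 2) • b) (-a)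
        + dotR ((2 : ℝ) • β - (lam ^ 2 / 2) • a) (-b) = -2 := by
  refine ⟨fun x y z => tendsto_div_nhdsGT_of_eq_mul_add_sq (d := ceilG α β lam (x, y, z))
      fun t => ?_, ?_⟩
  · rw [ceilG_Hmul_Hdil, ceilG_seam hface hlam.ne', hface]
    simp only [dotR_eq_dotProduct, add_dotProduct, sub_dotProduct, smul_dotProduct, smul_eq_mul]
    ring
  · simp only [dotR_eq_dotProduct, dotProduct_neg, add_dotProduct, sub_dotProduct,
      smul_dotProduct, smul_eq_mul, dotProduct_comm b a] at hface ⊢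
    linear_combination -2 * hface
end
end

section
/- Every translate of the corner cone of the unit square is realized as a blow-up: for every c₁, c₂ ∈ ℝ and every sequence ε_n > 0 with ε_n → 0, there exists a sequence p_n ∈ ℝ² with p_n → (1, −1) such that the sets C_n = (1/ε_n)·(Ω − p_n) have Kuratowski limit equal to the translated cone {q : q₁ ≤ c₁ and q₂ ≥ c₂}; that is, infDist(q, C_n) → 0 for every q in this cone and liminf_n infDist(q, C_n) > 0 for every q outside it. -/
open Filter Metric

noncomputable section

/-- The closed unit square `Ω = [−1,1] × [−1,1]` in `ℝ²`. -/
def unitSquare : Set (ℝ × ℝ) := Set.Icc (-1) 1 ×ˢ Set.Icc (-1) 1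

/-- The blow-up set `(1/ε)·(Ω − p)` of the unit square at basepoint `p` and scale `ε`. -/
def blowupSet (p : ℝ × ℝ) (ε : ℝ) : Set (ℝ × ℝ) :=
  (fun w => (1 / ε) • (w - p)) '' unitSquare

lemma le_infDist' {s : Set (ℝ × ℝ)} {x : ℝ × ℝ} {d : ℝ} (hs : s.Nonempty)
    (h : ∀ y ∈ s, d ≤ dist x y) : d ≤ infDist x s := by
  by_contra hlt
  push_neg at hlt
  obtain ⟨y, hy, hdy⟩ := (infDist_lt_iff hs).1 hlt
  exact absurd (h y hy) (not_le.2 hdy)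

lemma corner_mem : ((1 : ℝ), (-1 : ℝ)) ∈ unitSquare := by
  constructor <;> constructor <;> norm_num

/-- **Every translate of the corner cone of the unit square is realized as a blow-up:**
for all `c₁, c₂ ∈ ℝ` and every sequence `ε_n > 0` with `ε_n → 0`, there are basepoints
`p_n → (1, −1)` such that the sets `C_n = (1/ε_n)·(Ω − p_n)` have Kuratowski limit equal
to the translated cone `{q : q₁ ≤ c₁ and q₂ ≥ c₂}`. -/
theorem blowup_square_corner_translates (c₁ c₂ : ℝ) (ε : ℕ → ℝ) (hε : ∀ n, 0 < ε n)
    (hε0 : Tendsto ε atTop (nhds 0)) :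
    ∃ p : ℕ → ℝ × ℝ, Tendsto p atTop (nhds ((1, -1) : ℝ × ℝ)) ∧
      (∀ q : ℝ × ℝ, q.1 ≤ c₁ → c₂ ≤ q.2 →
        Tendsto (fun n => infDist q (blowupSet (p n) (ε n))) atTop (nhds 0)) ∧
      (∀ q : ℝ × ℝ, ¬(q.1 ≤ c₁ ∧ c₂ ≤ q.2) →
        0 < Filter.liminf (fun n => infDist q (blowupSet (p n) (ε n))) atTop) := by
  set p : ℕ → ℝ × ℝ := fun n => (1 - ε n * c₁, -1 - ε n * c₂) with hp
  -- The constant point (c₁, c₂) is always in the blow-up set.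
  have hmem : ∀ n, ((c₁, c₂) : ℝ × ℝ) ∈ blowupSet (p n) (ε n) := by
    intro n
    refine ⟨(1, -1), corner_mem, ?_⟩
    have hne := (hε n).ne'
    simp only [hp, Prod.smul_mk, Prod.mk_sub_mk, smul_eq_mul]
    refine Prod.ext ?_ ?_ <;> field_simp <;> ring
  have hne : ∀ n, (blowupSet (p n) (ε n)).Nonempty := fun n => ⟨_, hmem n⟩
  -- each point of blowupSet has first coordinate ≤ c₁ and second ≥ c₂
  have hcoord : ∀ n, ∀ y ∈ blowupSet (p n) (ε n), y.1 ≤ c₁ ∧ c₂ ≤ y.2 := by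
    intro n y hy
    obtain ⟨w, ⟨⟨hw1l, hw1u⟩, hw2l, hw2u⟩, rfl⟩ := hy
    have hεn := hε n
    constructor
    · show (1 / ε n) * (w.1 - (1 - ε n * c₁)) ≤ c₁
      rw [div_mul_eq_mul_div, one_mul, div_le_iff₀ hεn]
      nlinarith
    · show c₂ ≤ (1 / ε n) * (w.2 - (-1 - ε n * c₂))
      rw [div_mul_eq_mul_div, one_mul, le_div_iff₀ hεn]
      nlinarith
  refine ⟨p, ?_, ?_, ?_⟩
  · have h1 : Tendsto (fun n => 1 - ε n * c₁) atTop (nhds (1 : ℝ)) := by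
      have := (tendsto_const_nhds (x := (1:ℝ)) (f := atTop)).sub (hε0.mul_const c₁)
      simpa using this
    have h2 : Tendsto (fun n => -1 - ε n * c₂) atTop (nhds (-1 : ℝ)) := by
      have := (tendsto_const_nhds (x := (-1:ℝ)) (f := atTop)).sub (hε0.mul_const c₂)
      simpa using this
    exact h1.prodMk_nhds h2
  · intro q hq1 hq2
    have hev : ∀ᶠ n in atTop, infDist q (blowupSet (p n) (ε n)) = 0 := by
      set K : ℝ := 1 + |c₁ - q.1| + |q.2 - c₂| with hK
      have hKpos : 0 < K := by positivity
      have hsmall : ∀ᶠ n in atTop, ε n < 2 / K :=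
        hε0.eventually (eventually_lt_nhds (by positivity))
      filter_upwards [hsmall] with n hn
      apply infDist_zero_of_mem
      refine ⟨(1 - ε n * c₁ + ε n * q.1, -1 - ε n * c₂ + ε n * q.2), ?_, ?_⟩
      · have hεn := hε n
        have hK2 : ε n * K < 2 := by
          have := mul_lt_mul_of_pos_right hn hKpos
          rwa [div_mul_cancel₀ (2 : ℝ) hKpos.ne'] at this
        have ha : ε n * (c₁ - q.1) ≤ 2 := by
          have h1 : c₁ - q.1 ≤ K := by
            have := abs_nonneg (q.2 - c₂); have := le_abs_self (c₁ - q.1); simp only [hK]; linarith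
          nlinarith
        have hb : ε n * (q.2 - c₂) ≤ 2 := by
          have h1 : q.2 - c₂ ≤ K := by
            have := abs_nonneg (c₁ - q.1); have := le_abs_self (q.2 - c₂); simp only [hK]; linarith
          nlinarith
        refine ⟨⟨?_, ?_⟩, ?_, ?_⟩ <;> simp only [] <;> nlinarith [hε n]
      · have hne := (hε n).ne'
        simp only [hp, Prod.smul_mk, Prod.mk_sub_mk, smul_eq_mul]
        refine Prod.ext ?_ ?_ <;> field_simp <;> ring
    exact Tendsto.congr' (by filter_upwards [hev] with n h using h.symm) tendsto_const_nhds
  · intro q hq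
    rw [not_and_or] at hq
    -- lower bound δ on infDist for all n
    obtain ⟨δ, hδpos, hδ⟩ : ∃ δ : ℝ, 0 < δ ∧ ∀ n, δ ≤ infDist q (blowupSet (p n) (ε n)) := by
      rcases hq with h | h
      · push_neg at h
        refine ⟨q.1 - c₁, by linarith, fun n => ?_⟩
        refine le_infDist' (hne n) fun y hy => ?_
        have h1 := (hcoord n y hy).1
        calc q.1 - c₁ ≤ q.1 - y.1 := by linarith
          _ ≤ |q.1 - y.1| := le_abs_self _
          _ = dist q.1 y.1 := (Real.dist_eq _ _).symm
          _ ≤ dist q y := by rw [Prod.dist_eq]; exact le_max_left _ _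
      · push_neg at h
        refine ⟨c₂ - q.2, by linarith, fun n => ?_⟩
        refine le_infDist' (hne n) fun y hy => ?_
        have h1 := (hcoord n y hy).2
        calc c₂ - q.2 ≤ y.2 - q.2 := by linarith
          _ ≤ |q.2 - y.2| := by rw [abs_sub_comm]; exact le_abs_self _
          _ = dist q.2 y.2 := (Real.dist_eq _ _).symm
          _ ≤ dist q y := by rw [Prod.dist_eq]; exact le_max_right _ _
    have hbdd : IsBoundedUnder (· ≤ ·) atTop
        (fun n => infDist q (blowupSet (p n) (ε n))) :=
      isBoundedUnder_of ⟨dist q (c₁, c₂), fun n => infDist_le_dist_of_mem (hmem n)⟩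
    calc (0 : ℝ) < δ := hδpos
      _ ≤ Filter.liminf (fun n => infDist q (blowupSet (p n) (ε n))) atTop :=
        le_liminf_of_le hbdd.isCoboundedUnder_ge (Filter.Eventually.of_forall hδ)
end
end
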